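/- If 𝔑₁ and 𝔑₂ are von Neumann algebras on ℋ that are split (there exists a type I factor 𝔐 with 𝔑₁ ⊆ 𝔐 ⊆ 𝔑₂'), then 𝔑₁ and 𝔑₂ are Schlieder independent: A₁A₂ ≠ 0 whenever 0 ≠ A₁ ∈ 𝔑₁ and 0 ≠ A₂ ∈ 𝔑₂. -/

import Mathlib

/-- `P` is an (orthogonal) projection operator. -/
def IsProjOp {H : Type*} [NormedAddCommGroup H] [InnerProductSpace ℂ H] [CompleteSpace H]
    (P : H →L[ℂ] H) : Prop :=
  IsIdempotentElem P ∧ IsSelfAdjoint P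

/-- A factor: the center of `S` consists of scalar multiples of the identity. -/
def IsFactorSet {H : Type*} [NormedAddCommGroup H] [InnerProductSpace ℂ H] [CompleteSpace H]
    (S : Set (H →L[ℂ] H)) : Prop :=
  ∀ x ∈ S, (∀ y ∈ S, x * y = y * x) → ∃ c : ℂ, x = c • (1 : H →L[ℂ] H)

/-- `P` is a minimal projection in `S`. -/
def IsMinimalProjIn {H : Type*} [NormedAddCommGroup H] [InnerProductSpace ℂ H]
    [CompleteSpace H] (S : Set (H →L[ℂ] H)) (P : H →L[ℂ] H) : Prop :=
  P ∈ S ∧ IsProjOp P ∧ P ≠ 0 ∧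
    ∀ Q ∈ S, IsProjOp Q → Q * P = Q → Q = 0 ∨ Q = P

/-- A type I factor: a factor possessing a minimal projection. -/
def IsTypeIFactorSet {H : Type*} [NormedAddCommGroup H] [InnerProductSpace ℂ H]
    [CompleteSpace H] (S : Set (H →L[ℂ] H)) : Prop :=
  IsFactorSet S ∧ ∃ P, IsMinimalProjIn S P

/-! If `a ∈ 𝔐` and `b ∈ 𝔐'` with `a b = 0`, the vectors annihilated by every `a m` (`m ∈ 𝔐`)
form a closed subspace invariant under both `𝔐` and `𝔐'`. Its projection therefore lies in the
center of the factor `𝔐`, so it is `0` or `1`: it is `1` only if `a = 0`, and it is `0` only if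
`b = 0`, since it contains the range of `b`. -/

open VonNeumannAlgebra

namespace IsFactorSet

variable {H : Type*} [NormedAddCommGroup H] [InnerProductSpace ℂ H] [CompleteSpace H]
  {M : VonNeumannAlgebra H}

theorem eq_zero_or_eq_one_of_mem_center (hM : IsFactorSet (M : Set (H →L[ℂ] H)))
    {e : H →L[ℂ] H} (he : IsIdempotentElem e) (heM : e ∈ M) (heM' : e ∈ M.commutant) :
    e = 0 ∨ e = 1 := by
  obtain ⟨c, rfl⟩ := hM e heM fun y hy => (mem_commutant_iff.mp heM' y hy).symm
  rcases subsingleton_or_nontrivial (H →L[ℂ] H) with _ | _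
  · exact .inl (Subsingleton.elim _ _)
  rw [← Algebra.algebraMap_eq_smul_one] at he ⊢
  have hc : IsIdempotentElem c := (algebraMap ℂ (H →L[ℂ] H)).injective <| by
    rw [map_mul]; exact he
  rcases IsIdempotentElem.iff_eq_zero_or_one.mp hc with rfl | rfl <;> simp

theorem eq_bot_or_eq_top_of_invtSubmodule (hM : IsFactorSet (M : Set (H →L[ℂ] H)))
    (K : Submodule ℂ H) [K.HasOrthogonalProjection]
    (hKM : ∀ m ∈ M, K ∈ Module.End.invtSubmodule (m : H →ₗ[ℂ] H))
    (hKM' : ∀ n ∈ M.commutant, K ∈ Module.End.invtSubmodule (n : H →ₗ[ℂ] H)) :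
    K = ⊥ ∨ K = ⊤ := by
  have hE := isStarProjection_starProjection (U := K)
  have hEM : K.starProjection ∈ M :=
    (hE.mem_iff M).mpr fun n hn => by rw [Submodule.range_starProjection]; exact hKM' n hn
  have hEM' : K.starProjection ∈ M.commutant :=
    (hE.mem_iff M.commutant).mpr fun m hm => by
      rw [Submodule.range_starProjection]; exact hKM m (by simpa using hm)
  rcases hM.eq_zero_or_eq_one_of_mem_center hE.isIdempotentElem hEM hEM' with h | h
  · rw [← Submodule.starProjection_bot, Submodule.starProjection_inj] at h
    exact .inl h
  · rw [← Submodule.starProjection_top', Submodule.starProjection_inj] at h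
    exact .inr h

theorem mul_ne_zero_of_mem_commutant (hM : IsFactorSet (M : Set (H →L[ℂ] H)))
    {a b : H →L[ℂ] H} (ha : a ∈ M) (hb : b ∈ M.commutant) (ha0 : a ≠ 0) (hb0 : b ≠ 0) :
    a * b ≠ 0 := by
  intro hab
  let K : Submodule ℂ H := ⨅ m ∈ M, (a * m).ker
  have mem_K (x : H) : x ∈ K ↔ ∀ m ∈ M, a (m x) = 0 := by simp [K]
  have hK_closed : IsClosed (K : Set H) := by
    simp only [K, Submodule.coe_iInf]
    exact isClosed_biInter fun m _ => (a * m).isClosed_ker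
  have : CompleteSpace K := hK_closed.completeSpace_coe
  have hKM : ∀ m ∈ M, K ∈ Module.End.invtSubmodule (m : H →ₗ[ℂ] H) := by
    intro m hm x hx
    rw [Submodule.mem_comap, mem_K] at *
    intro m' hm'
    simpa using hx (m' * m) (mul_mem hm' hm)
  have hKM' : ∀ n ∈ M.commutant, K ∈ Module.End.invtSubmodule (n : H →ₗ[ℂ] H) := by
    intro n hn x hx
    rw [Submodule.mem_comap, mem_K] at *
    intro m hm
    have : a * m * n = n * (a * m) := mem_commutant_iff.mp hn (a * m) (mul_mem ha hm)
    simpa [hx m hm] using congr($this x)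
  rcases hM.eq_bot_or_eq_top_of_invtSubmodule K hKM hKM' with hK | hK
  · refine hb0 (ContinuousLinearMap.ext fun ξ => ?_)
    have : b ξ ∈ K := (mem_K _).mpr fun m hm => by
      have : a * m * b = 0 := by
        rw [mul_assoc, mem_commutant_iff.mp hb m hm, ← mul_assoc, hab, zero_mul]
      simpa using congr($this ξ)
    simpa [hK] using this
  · refine ha0 (ContinuousLinearMap.ext fun x => ?_)
    simpa using (mem_K x).mp (hK ▸ Submodule.mem_top) 1 (one_mem M)

end IsFactorSet

theorem schlieder_of_split {H : Type*} [NormedAddCommGroup H] [InnerProductSpace ℂ H]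
    [CompleteSpace H]
    (N₁ N₂ M : VonNeumannAlgebra H)
    (hM : IsTypeIFactorSet (M : Set (H →L[ℂ] H)))
    (h₁ : (N₁ : Set (H →L[ℂ] H)) ⊆ (M : Set (H →L[ℂ] H)))
    (h₂ : (M : Set (H →L[ℂ] H)) ⊆ (N₂.commutant : Set (H →L[ℂ] H))) :
    ∀ a ∈ N₁, ∀ b ∈ N₂, a ≠ 0 → b ≠ 0 → a * b ≠ 0 := by
  intro a ha b hb ha0 hb0
  have hbM' : b ∈ M.commutant :=
    mem_commutant_iff.mpr fun g hg => (mem_commutant_iff.mp (h₂ hg) b hb).symm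
  exact hM.1.mul_ne_zero_of_mem_commutant (h₁ ha) hbM' ha0 hb0
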